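/- Consider the SIR⁽²⁾S model with vaccination and assume 1 < R₀ < 2·(c₁+c₂+μ)/c₁. Set η_s* = (c₁+μ)·(c₂+μ)·(R₀−1)/(c₁+c₂+μ − c₁·R₀/2) and θ_c = ((c₁+μ)·(c₂+μ)/(c₁/2+c₂+μ))·(1 − 1/R₀). Then η_s* > 0, R_e(η_s*, 0) = 1, θ(η_s*, 0) = θ_c, and for every pair (η_s, η₁) of nonnegative rates with R_e(η_s, η₁) = 1 one has θ(η_s, η₁) ≥ θ_c. In other words, θ_c is the critical vaccine supply and it is achieved by vaccinating only fully susceptible individuals. -/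

import Mathlib

/-- D = (c₁+μ)(c₂+μ) + μ·η₁. -/
def sir2sD (μ c₁ c₂ η₁ : ℝ) : ℝ := (c₁ + μ) * (c₂ + μ) + μ * η₁

/-- E = D + ηs·(c₁+c₂+μ+η₁). -/
def sir2sE (μ c₁ c₂ ηs η₁ : ℝ) : ℝ := sir2sD μ c₁ c₂ η₁ + ηs * (c₁ + c₂ + μ + η₁)

/-- Effective reproduction number R_e(ηs, η₁) = R₀·(D + ηs·c₁/2)/E with R₀ = β/(γ+μ). -/
noncomputable def sir2sRe (β γ μ c₁ c₂ ηs η₁ : ℝ) : ℝ :=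
  β / (γ + μ) * (sir2sD μ c₁ c₂ η₁ + ηs * c₁ / 2) / sir2sE μ c₁ c₂ ηs η₁

/-- Vaccine supply at the disease-free equilibrium: θ(ηs, η₁) = ηs·D/E + η₁·ηs·c₁/E. -/
noncomputable def sir2sTheta (μ c₁ c₂ ηs η₁ : ℝ) : ℝ :=
  ηs * sir2sD μ c₁ c₂ η₁ / sir2sE μ c₁ c₂ ηs η₁ +
    η₁ * (ηs * c₁) / sir2sE μ c₁ c₂ ηs η₁

/-- If 1 < R₀ < 2(c₁+c₂+μ)/c₁, then ηs* = (c₁+μ)(c₂+μ)(R₀−1)/(c₁+c₂+μ − c₁R₀/2) is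
positive, satisfies R_e(ηs*, 0) = 1, uses vaccine supply
θ(ηs*, 0) = θ_c = ((c₁+μ)(c₂+μ)/(c₁/2+c₂+μ))·(1 − 1/R₀), and θ_c is the minimal
vaccine supply among all nonnegative (ηs, η₁) with R_e(ηs, η₁) = 1. -/
theorem sir2s_critical_vaccine_supply_small_R0
    (β γ μ c₁ c₂ : ℝ) (hβ : 0 < β) (hγ : 0 < γ) (hμ : 0 < μ)
    (hc₁ : 0 < c₁) (hc₂ : 0 < c₂)
    (hR0lo : 1 < β / (γ + μ))
    (hR0hi : β / (γ + μ) < 2 * (c₁ + c₂ + μ) / c₁)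
    (ηs_star θc : ℝ)
    (hηs_star : ηs_star =
      (c₁ + μ) * (c₂ + μ) * (β / (γ + μ) - 1) / (c₁ + c₂ + μ - c₁ * (β / (γ + μ)) / 2))
    (hθc : θc = (c₁ + μ) * (c₂ + μ) / (c₁ / 2 + c₂ + μ) * (1 - 1 / (β / (γ + μ)))) :
    0 < ηs_star ∧
    sir2sRe β γ μ c₁ c₂ ηs_star 0 = 1 ∧
    sir2sTheta μ c₁ c₂ ηs_star 0 = θc ∧
    (∀ ηs η₁ : ℝ, 0 ≤ ηs → 0 ≤ η₁ → sir2sRe β γ μ c₁ c₂ ηs η₁ = 1 →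
      θc ≤ sir2sTheta μ c₁ c₂ ηs η₁) := by
  have hγμ : 0 < γ + μ := by linarith
  simp only [sir2sRe, sir2sD, sir2sE, sir2sTheta] at *
  generalize hRdef : β / (γ + μ) = R at hR0lo hR0hi hηs_star hθc ⊢
  have hR1 : 1 < R := hR0lo
  have hRpos : 0 < R := by linarith
  have hKpos : 0 < c₁ + c₂ + μ - c₁ * R / 2 := by
    have h2 : R * c₁ < 2 * (c₁ + c₂ + μ) := (lt_div_iff₀ hc₁).mp hR0hi
    linarith
  have hD0 : (0:ℝ) < (c₁ + μ) * (c₂ + μ) := by positivity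
  have hηKey : ηs_star * (c₁ + c₂ + μ - c₁ * R / 2) = (c₁ + μ) * (c₂ + μ) * (R - 1) := by
    rw [hηs_star, div_mul_cancel₀]
    exact hKpos.ne'
  have hηpos : 0 < ηs_star := by
    rw [hηs_star]
    apply div_pos _ hKpos
    have h : 0 < R - 1 := by linarith
    positivity
  have hE0 : (0:ℝ) < (c₁ + μ) * (c₂ + μ) + μ * 0 + ηs_star * (c₁ + c₂ + μ + 0) := by
    have h3 : 0 < ηs_star * (c₁ + c₂ + μ + 0) := by
      apply mul_pos hηpos; linarith
    nlinarith
  have hRe : R * ((c₁ + μ) * (c₂ + μ) + μ * 0 + ηs_star * c₁ / 2) /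
      ((c₁ + μ) * (c₂ + μ) + μ * 0 + ηs_star * (c₁ + c₂ + μ + 0)) = 1 := by
    rw [div_eq_one_iff_eq hE0.ne']
    linear_combination -hηKey
  have hbc : (0:ℝ) < c₁ / 2 + c₂ + μ := by linarith
  have hθc' : θc = (c₁ + μ) * (c₂ + μ) * (R - 1) / (R * (c₁ / 2 + c₂ + μ)) := by
    rw [hθc]
    field_simp
  have hθ : ηs_star * ((c₁ + μ) * (c₂ + μ) + μ * 0) /
        ((c₁ + μ) * (c₂ + μ) + μ * 0 + ηs_star * (c₁ + c₂ + μ + 0)) +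
      0 * (ηs_star * c₁) / ((c₁ + μ) * (c₂ + μ) + μ * 0 + ηs_star * (c₁ + c₂ + μ + 0)) = θc := by
    rw [← add_div, hθc', div_eq_div_iff hE0.ne' (by positivity)]
    linear_combination ((c₁ + μ) * (c₂ + μ)) * hηKey
  refine ⟨hηpos, hRe, hθ, ?_⟩
  intro ηs η₁ hs h1 hRe1
  have hD1 : (0:ℝ) < (c₁ + μ) * (c₂ + μ) + μ * η₁ := by nlinarith
  have hE1 : (0:ℝ) < (c₁ + μ) * (c₂ + μ) + μ * η₁ + ηs * (c₁ + c₂ + μ + η₁) := by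
    have h3 : 0 ≤ ηs * (c₁ + c₂ + μ + η₁) := by
      apply mul_nonneg hs; linarith
    linarith
  rw [div_eq_one_iff_eq hE1.ne'] at hRe1
  have hnn : (0:ℝ) ≤ R * (ηs * (η₁ * ((c₁ + μ) * c₁))) := by
    apply mul_nonneg hRpos.le
    apply mul_nonneg hs
    apply mul_nonneg h1
    positivity
  rw [← add_div, hθc', div_le_div_iff₀ (by positivity) hE1]
  have key : (ηs * ((c₁ + μ) * (c₂ + μ) + μ * η₁) + η₁ * (ηs * c₁)) * (R * (c₁ / 2 + c₂ + μ)) -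
      (c₁ + μ) * (c₂ + μ) * (R - 1) *
        ((c₁ + μ) * (c₂ + μ) + μ * η₁ + ηs * (c₁ + c₂ + μ + η₁)) =
      R * (ηs * (η₁ * ((c₁ + μ) * c₁))) / 2 := by
    linear_combination (-((c₁ + μ) * (c₂ + μ))) * hRe1
  linarith [key, hnn]
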